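/- Under the classical solution and decay assumptions, suppose ‖n̄‖_{L∞(Q_T)} ≤ A, ‖n̄‖_{L²(Q_T)} ≤ A, ‖∇W‖_{L²(Q_T)} ≤ A and |G(p(x,t),a)| ≤ A for all (x,t) ∈ Q_T and a ∈ [0,1]. Then for every φ ∈ C_c^∞(ℝ^d × (0,T)): |∬_{Q_T} n̄ ∂_t φ dx dt| ≤ A² ‖∇φ‖_{L²(Q_T)} + A² ‖φ‖_{L²(Q_T)}; that is, ∂_t n̄ is bounded in L²(0,T; H^{−1}(ℝ^d)) by a constant independent of N, k and ν. The same bound holds with n̄ replaced by the phenotype density n(·,·,a), for each fixed a ∈ [0,1]. -/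

import Mathlib

open MeasureTheory Filter Topology Real RealInnerProductSpace ENNReal

noncomputable section

/-- Euclidean space `ℝ^d`. -/
abbrev Rd (d : ℕ) := EuclideanSpace ℝ (Fin d)

/-- Spatial gradient. -/
def grad {d : ℕ} (f : Rd d → ℝ) (x : Rd d) : Rd d := gradient f x

/-- Spatial Laplacian (sum of second partial derivatives). -/
def lap {d : ℕ} (f : Rd d → ℝ) (x : Rd d) : ℝ :=
  ∑ i, fderiv ℝ (fun y => fderiv ℝ f y (EuclideanSpace.single i 1)) x
    (EuclideanSpace.single i 1)

/-- Divergence of a vector field. -/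
def dvg {d : ℕ} (v : Rd d → Rd d) (x : Rd d) : ℝ :=
  ∑ i, fderiv ℝ (fun y => EuclideanSpace.proj i (v y)) x (EuclideanSpace.single i 1)

/-- The measure on `Q_T = ℝ^d × [0,T]`. -/
def μQT (d : ℕ) (T : ℝ) : Measure (Rd d × ℝ) :=
  (volume : Measure (Rd d)).prod ((volume : Measure ℝ).restrict (Set.Icc 0 T))

/-- The averaged density `n̄ = (1/N) ∑ᵢ n⁽ⁱ⁾`. -/
def nbar {d N : ℕ} (n : Fin N → Rd d → ℝ → ℝ) (x : Rd d) (t : ℝ) : ℝ :=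
  (N : ℝ)⁻¹ * ∑ i, n i x t

/-- The fractions `F⁽ⁱ⁾ = n⁽ⁱ⁾/∑ⱼ n⁽ʲ⁾` where `n̄ > 0`, and `0` elsewhere. -/
def Ff {d N : ℕ} (n : Fin N → Rd d → ℝ → ℝ) (i : Fin N) (x : Rd d) (t : ℝ) : ℝ :=
  if 0 < nbar n x t then n i x t / ∑ j, n j x t else 0

/-- The phenotype `i/N` of the `i`-th species (`i = 1, …, N`). -/
def phen {N : ℕ} (i : Fin N) : ℝ := ((i : ℕ) + 1 : ℝ) / N

/-- Hypotheses on the growth function `G = G(p, a)`: it is `C¹`, `∂G/∂p ≤ -c < 0`,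
and `G(0,a) > 0` is uniformly bounded from above for `a ∈ [0,1]`. -/
def GHyp (G : ℝ → ℝ → ℝ) : Prop :=
  ContDiff ℝ 1 (fun q : ℝ × ℝ => G q.1 q.2) ∧
  (∃ c > (0 : ℝ), ∀ p a : ℝ, a ∈ Set.Icc (0 : ℝ) 1 → deriv (fun s => G s a) p ≤ -c) ∧
  (∃ B : ℝ, ∀ a ∈ Set.Icc (0 : ℝ) 1, 0 < G 0 a ∧ G 0 a ≤ B)

/-- `u(·,t)` satisfies Schwartz-type decay estimates, uniformly in `t ∈ [0,T]`. -/
def SchwartzUniformly (d : ℕ) (T : ℝ) (u : Rd d → ℝ → ℝ) : Prop :=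
  ∀ km m : ℕ, ∃ C : ℝ, ∀ t ∈ Set.Icc (0 : ℝ) T, ∀ x : Rd d,
    ‖x‖ ^ km * ‖iteratedFDeriv ℝ m (fun y => u y t) x‖ ≤ C

/-- Test functions: smooth, compactly supported, with time support in `s`. -/
def IsTest (d : ℕ) (s : Set ℝ) (φ : Rd d → ℝ → ℝ) : Prop :=
  ContDiff ℝ (⊤ : ℕ∞) (fun z : Rd d × ℝ => φ z.1 z.2) ∧
  HasCompactSupport (fun z : Rd d × ℝ => φ z.1 z.2) ∧
  ∀ (x : Rd d) (t : ℝ), t ∉ s → φ x t = 0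

/-- Classical solutions of the tissue-growth system with rapid decay:
smooth nonnegative functions satisfying the system pointwise on `[0,T]`,
Schwartz in `x` uniformly in `t`. -/
def ClassicalSol (d : ℕ) (T : ℝ) {N : ℕ} (k ν : ℝ) (G : ℝ → ℝ → ℝ)
    (n : Fin N → Rd d → ℝ → ℝ) (p W : Rd d → ℝ → ℝ) : Prop :=
  (∀ i, ContDiff ℝ (⊤ : ℕ∞) (fun z : Rd d × ℝ => n i z.1 z.2)) ∧
  ContDiff ℝ (⊤ : ℕ∞) (fun z : Rd d × ℝ => p z.1 z.2) ∧
  ContDiff ℝ (⊤ : ℕ∞) (fun z : Rd d × ℝ => W z.1 z.2) ∧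
  (∀ i x t, 0 ≤ n i x t) ∧ (∀ x t, 0 ≤ p x t) ∧ (∀ x t, 0 ≤ W x t) ∧
  (∀ i (x : Rd d), ∀ t ∈ Set.Icc (0 : ℝ) T,
    deriv (fun s => n i x s) t =
      dvg (fun y => n i y t • grad (fun y' => W y' t) y) x
        + n i x t * G (p x t) (phen i)) ∧
  (∀ x t, p x t = (k / (k - 1)) * nbar n x t ^ (k - 1)) ∧
  (∀ (x : Rd d) (t : ℝ), W x t - ν * lap (fun y => W y t) x = p x t) ∧
  (∀ i, SchwartzUniformly d T (n i)) ∧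
  SchwartzUniformly d T p ∧ SchwartzUniformly d T W

/-- Weak solutions of the tissue-growth system (no initial condition imposed):
the pressure law holds pointwise, the Brinkman equation holds in the sense of
distributions in `x` for each time, and the transport–growth equations hold in
the weak sense against test functions supported in `ℝ^d × (0,T)`. -/
def WeakSol (d : ℕ) (T : ℝ) {N : ℕ} (k ν : ℝ) (G : ℝ → ℝ → ℝ)
    (n : Fin N → Rd d → ℝ → ℝ) (p W : Rd d → ℝ → ℝ) : Prop :=
  (∀ i x t, 0 ≤ n i x t) ∧ (∀ x t, 0 ≤ p x t) ∧ (∀ x t, 0 ≤ W x t) ∧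
  (∀ x t, p x t = (k / (k - 1)) * nbar n x t ^ (k - 1)) ∧
  (∀ t ∈ Set.Icc (0 : ℝ) T, ∀ θ : Rd d → ℝ, ContDiff ℝ (⊤ : ℕ∞) θ → HasCompactSupport θ →
    (∫ x, (W x t * θ x - ν * W x t * lap θ x)) = ∫ x, p x t * θ x) ∧
  (∀ i, ∀ φ : Rd d → ℝ → ℝ, IsTest d (Set.Ioo 0 T) φ →
    (∫ q, (n i q.1 q.2 * deriv (fun s => φ q.1 s) q.2
      - n i q.1 q.2 * ⟪grad (fun y => W y q.2) q.1, grad (fun y => φ y q.2) q.1⟫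
      + n i q.1 q.2 * G (p q.1 q.2) (phen i) * φ q.1 q.2) ∂(μQT d T)) = 0)

/-- Weak solutions with prescribed initial data `n₀⁽ⁱ⁾`. -/
def WeakSolIC (d : ℕ) (T : ℝ) {N : ℕ} (k ν : ℝ) (G : ℝ → ℝ → ℝ)
    (n : Fin N → Rd d → ℝ → ℝ) (p W : Rd d → ℝ → ℝ) (n₀ : Fin N → Rd d → ℝ) : Prop :=
  (∀ i x t, 0 ≤ n i x t) ∧ (∀ x t, 0 ≤ p x t) ∧ (∀ x t, 0 ≤ W x t) ∧
  (∀ x t, p x t = (k / (k - 1)) * nbar n x t ^ (k - 1)) ∧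
  (∀ t ∈ Set.Icc (0 : ℝ) T, ∀ θ : Rd d → ℝ, ContDiff ℝ (⊤ : ℕ∞) θ → HasCompactSupport θ →
    (∫ x, (W x t * θ x - ν * W x t * lap θ x)) = ∫ x, p x t * θ x) ∧
  (∀ i, ∀ φ : Rd d → ℝ → ℝ, IsTest d (Set.Ico 0 T) φ →
    (∫ q, (n i q.1 q.2 * deriv (fun s => φ q.1 s) q.2
      - n i q.1 q.2 * ⟪grad (fun y => W y q.2) q.1, grad (fun y => φ y q.2) q.1⟫)
      ∂(μQT d T))
      = -(∫ q, n i q.1 q.2 * G (p q.1 q.2) (phen i) * φ q.1 q.2 ∂(μQT d T))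
        - ∫ x, n₀ i x * φ x 0)

/-- The triple-limit sequence setup: `N_j → ∞`, `k_j → ∞` (`k_j > 2`), `ν_j → 0`,
weak solutions for each `j`, the uniform-in-`j` a priori bounds with constant `A`,
and the weak `L²(Q_T)` convergences `n̄_j ⇀ n̄`, `p_j ⇀ p`. -/
def TripleSetup (d : ℕ) (T : ℝ) (G : ℝ → ℝ → ℝ) (A : ℝ)
    (Nj : ℕ → ℕ) (kj νj : ℕ → ℝ)
    (n : (j : ℕ) → Fin (Nj j) → Rd d → ℝ → ℝ)
    (p W : ℕ → Rd d → ℝ → ℝ) (nbarl pl : Rd d → ℝ → ℝ) : Prop :=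
  Tendsto (fun j => (Nj j : ℝ)) atTop atTop ∧
  Tendsto kj atTop atTop ∧ (∀ j, 2 < kj j) ∧
  Tendsto νj atTop (𝓝 0) ∧ (∀ j, 0 < νj j) ∧
  (∀ j, WeakSol d T (kj j) (νj j) G (n j) (p j) (W j)) ∧
  (∀ j,
    eLpNorm (fun q : Rd d × ℝ => nbar (n j) q.1 q.2) 2 (μQT d T) ≤ ENNReal.ofReal A ∧
    eLpNorm (fun q : Rd d × ℝ => nbar (n j) q.1 q.2) ⊤ (μQT d T) ≤ ENNReal.ofReal A ∧
    eLpNorm (fun q : Rd d × ℝ => p j q.1 q.2) ⊤ (μQT d T) ≤ ENNReal.ofReal A ∧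
    (∀ t ∈ Set.Icc (0 : ℝ) T,
      eLpNorm (fun x => p j x t) 1 (volume : Measure (Rd d)) ≤ ENNReal.ofReal A) ∧
    eLpNorm (fun q : Rd d × ℝ => ‖grad (fun y => W j y q.2) q.1‖) 2 (μQT d T)
      ≤ ENNReal.ofReal A ∧
    (∀ t ∈ Set.Icc (0 : ℝ) T, (∫ x, ‖x‖ * nbar (n j) x t) ≤ A)) ∧
  (∀ g : Rd d × ℝ → ℝ, MemLp g 2 (μQT d T) →
    Tendsto (fun j => ∫ q, nbar (n j) q.1 q.2 * g q ∂(μQT d T)) atTop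
      (𝓝 (∫ q, nbarl q.1 q.2 * g q ∂(μQT d T))) ∧
    Tendsto (fun j => ∫ q, p j q.1 q.2 * g q ∂(μQT d T)) atTop
      (𝓝 (∫ q, pl q.1 q.2 * g q ∂(μQT d T))))
section AuxCalc

variable {d : ℕ}

lemma slice_x {f : Rd d → ℝ → ℝ} (hf : ContDiff ℝ (⊤ : ℕ∞) (fun z : Rd d × ℝ => f z.1 z.2)) (t : ℝ) :
    ContDiff ℝ (⊤ : ℕ∞) (fun y : Rd d => f y t) :=
  hf.comp (contDiff_id.prodMk contDiff_const)

lemma slice_t {f : Rd d → ℝ → ℝ} (hf : ContDiff ℝ (⊤ : ℕ∞) (fun z : Rd d × ℝ => f z.1 z.2)) (x : Rd d) :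
    ContDiff ℝ (⊤ : ℕ∞) (fun s : ℝ => f x s) :=
  hf.comp (contDiff_const.prodMk contDiff_id)

lemma hasDerivAt_slice {f : Rd d → ℝ → ℝ} (hf : ContDiff ℝ (⊤ : ℕ∞) (fun z : Rd d × ℝ => f z.1 z.2))
    (x : Rd d) (t : ℝ) :
    HasDerivAt (fun s => f x s) (fderiv ℝ (fun z : Rd d × ℝ => f z.1 z.2) (x, t) (0, 1)) t := by
  have h1 : HasDerivAt (fun s : ℝ => ((x, s) : Rd d × ℝ)) (0, 1) t :=
    HasDerivAt.prodMk (hasDerivAt_const t x) (hasDerivAt_id t)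
  exact (hf.differentiable (by simp) (x, t)).hasFDerivAt.comp_hasDerivAt t h1

lemma deriv_slice {f : Rd d → ℝ → ℝ} (hf : ContDiff ℝ (⊤ : ℕ∞) (fun z : Rd d × ℝ => f z.1 z.2))
    (x : Rd d) (t : ℝ) :
    deriv (fun s => f x s) t = fderiv ℝ (fun z : Rd d × ℝ => f z.1 z.2) (x, t) (0, 1) :=
  (hasDerivAt_slice hf x t).deriv

lemma fderiv_slice {f : Rd d → ℝ → ℝ} (hf : ContDiff ℝ (⊤ : ℕ∞) (fun z : Rd d × ℝ => f z.1 z.2))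
    (x : Rd d) (t : ℝ) :
    fderiv ℝ (fun y => f y t) x
      = (fderiv ℝ (fun z : Rd d × ℝ => f z.1 z.2) (x, t)).comp
          (ContinuousLinearMap.inl ℝ (Rd d) ℝ) := by
  have h1 : HasFDerivAt (fun y : Rd d => ((y, t) : Rd d × ℝ))
      (ContinuousLinearMap.inl ℝ (Rd d) ℝ) x := hasFDerivAt_prodMk_left x t
  exact ((hf.differentiable (by simp) (x, t)).hasFDerivAt.comp x h1).fderiv

lemma grad_slice {f : Rd d → ℝ → ℝ} (hf : ContDiff ℝ (⊤ : ℕ∞) (fun z : Rd d × ℝ => f z.1 z.2))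
    (x : Rd d) (t : ℝ) :
    grad (fun y => f y t) x
      = (InnerProductSpace.toDual ℝ (Rd d)).symm
          ((fderiv ℝ (fun z : Rd d × ℝ => f z.1 z.2) (x, t)).comp
            (ContinuousLinearMap.inl ℝ (Rd d) ℝ)) := by
  rw [grad, gradient, fderiv_slice hf x t]

lemma continuous_gradSlice {f : Rd d → ℝ → ℝ}
    (hf : ContDiff ℝ (⊤ : ℕ∞) (fun z : Rd d × ℝ => f z.1 z.2)) :
    Continuous (fun z : Rd d × ℝ => grad (fun y => f y z.2) z.1) := by
  have h : (fun z : Rd d × ℝ => grad (fun y => f y z.2) z.1)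
      = fun z => (InnerProductSpace.toDual ℝ (Rd d)).symm
          ((fderiv ℝ (fun z : Rd d × ℝ => f z.1 z.2) z).comp
            (ContinuousLinearMap.inl ℝ (Rd d) ℝ)) := by
    funext z
    rw [grad_slice hf z.1 z.2]
  rw [h]
  exact (LinearIsometryEquiv.continuous _).comp
    ((hf.continuous_fderiv (by simp)).clm_comp continuous_const)

lemma continuous_derivSlice {f : Rd d → ℝ → ℝ}
    (hf : ContDiff ℝ (⊤ : ℕ∞) (fun z : Rd d × ℝ => f z.1 z.2)) :
    Continuous (fun z : Rd d × ℝ => deriv (fun s => f z.1 s) z.2) := by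
  have h : (fun z : Rd d × ℝ => deriv (fun s => f z.1 s) z.2)
      = fun z => fderiv ℝ (fun z : Rd d × ℝ => f z.1 z.2) z (0, 1) := by
    funext z
    rw [deriv_slice hf z.1 z.2]
  rw [h]
  exact (hf.continuous_fderiv (by simp)).clm_apply continuous_const

lemma fderiv_zero_off {F : Rd d × ℝ → ℝ} {z : Rd d × ℝ} (hz : z ∉ tsupport F) :
    fderiv ℝ F z = 0 := by
  have h0 : F =ᶠ[nhds z] 0 := by
    filter_upwards [(isClosed_tsupport F).isOpen_compl.mem_nhds hz] with w hw
    exact image_eq_zero_of_notMem_tsupport hw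
  rw [h0.fderiv_eq]
  exact fderiv_const_apply 0

lemma derivSlice_zero_off {f : Rd d → ℝ → ℝ}
    (hf : ContDiff ℝ (⊤ : ℕ∞) (fun z : Rd d × ℝ => f z.1 z.2)) {z : Rd d × ℝ}
    (hz : z ∉ tsupport (fun z : Rd d × ℝ => f z.1 z.2)) :
    deriv (fun s => f z.1 s) z.2 = 0 := by
  rw [deriv_slice hf z.1 z.2, fderiv_zero_off hz]
  rfl

lemma gradSlice_zero_off {f : Rd d → ℝ → ℝ}
    (hf : ContDiff ℝ (⊤ : ℕ∞) (fun z : Rd d × ℝ => f z.1 z.2)) {z : Rd d × ℝ}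
    (hz : z ∉ tsupport (fun z : Rd d × ℝ => f z.1 z.2)) :
    grad (fun y => f y z.2) z.1 = 0 := by
  rw [grad_slice hf z.1 z.2, fderiv_zero_off hz]
  simp

end AuxCalc
section AuxMeas

variable {d : ℕ} {T : ℝ}

lemma μQT_eq (d : ℕ) (T : ℝ) :
    μQT d T = (volume : Measure (Rd d × ℝ)).restrict (Set.univ ×ˢ Set.Icc 0 T) := by
  rw [μQT, Measure.volume_eq_prod, ← Measure.prod_restrict, Measure.restrict_univ]

instance (d : ℕ) (T : ℝ) : SigmaFinite (μQT d T) := by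
  rw [μQT_eq]; infer_instance

lemma integrable_μQT_of_cc {h : Rd d × ℝ → ℝ} (hc : Continuous h)
    (hcs : HasCompactSupport h) : Integrable h (μQT d T) := by
  rw [μQT_eq]
  exact (hc.integrable_of_hasCompactSupport hcs).restrict

lemma ae_Icc (d : ℕ) (T : ℝ) : ∀ᵐ z ∂(μQT d T), z.2 ∈ Set.Icc (0 : ℝ) T := by
  rw [μQT_eq]
  filter_upwards [ae_restrict_mem ((MeasurableSet.univ).prod measurableSet_Icc)] with z hz
  exact hz.2

lemma integral_μQT {f : Rd d × ℝ → ℝ} (hf : Integrable f (μQT d T)) :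
    ∫ z, f z ∂(μQT d T) = ∫ x, ∫ t in Set.Icc (0 : ℝ) T, f (x, t) := by
  rw [μQT] at hf ⊢
  exact MeasureTheory.integral_prod f hf

lemma integral_μQT_symm {f : Rd d × ℝ → ℝ} (hf : Integrable f (μQT d T)) :
    ∫ z, f z ∂(μQT d T) = ∫ t in Set.Icc (0 : ℝ) T, ∫ x, f (x, t) := by
  rw [μQT] at hf ⊢
  exact MeasureTheory.integral_prod_symm f hf

instance (T : ℝ) : IsFiniteMeasure ((volume : Measure ℝ).restrict (Set.Icc 0 T)) :=
  ⟨by rw [Measure.restrict_apply_univ]; exact measure_Icc_lt_top⟩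

end AuxMeas
section AuxDecay

variable {d : ℕ} {T : ℝ}

lemma schwartz_decay {u : Rd d → ℝ → ℝ} (hs : SchwartzUniformly d T u) (m : ℕ) :
    ∃ C : ℝ, ∀ t ∈ Set.Icc (0 : ℝ) T, ∀ x : Rd d,
      ‖iteratedFDeriv ℝ m (fun y => u y t) x‖ ≤ C * (1 + ‖x‖) ^ (-(d + 1 : ℝ)) := by
  choose C hC using fun km => hs km m
  refine ⟨∑ j ∈ Finset.range (d + 2), ((d + 1).choose j : ℝ) * max (C j) 0, fun t ht x => ?_⟩
  have hp : (0 : ℝ) < 1 + ‖x‖ := by positivity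
  set D := ‖iteratedFDeriv ℝ m (fun y => u y t) x‖ with hD
  have hD0 : 0 ≤ D := norm_nonneg _
  have key : (‖x‖ + 1) ^ (d + 1) * D
      ≤ ∑ j ∈ Finset.range (d + 2), ((d + 1).choose j : ℝ) * max (C j) 0 := by
    rw [add_pow, Finset.sum_mul]
    apply Finset.sum_le_sum
    intro j _
    have hb : ‖x‖ ^ j * D ≤ max (C j) 0 := le_trans (hC j t ht x) (le_max_left _ _)
    calc ‖x‖ ^ j * (1 : ℝ) ^ (d + 1 - j) * ((d + 1).choose j : ℝ) * D
        = ((d + 1).choose j : ℝ) * (‖x‖ ^ j * D) := by rw [one_pow]; ring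
      _ ≤ ((d + 1).choose j : ℝ) * max (C j) 0 := by
          exact mul_le_mul_of_nonneg_left hb (by positivity)
  have hcast : (-(d + 1 : ℝ)) = -((d + 1 : ℕ) : ℝ) := by push_cast; ring
  rw [hcast, Real.rpow_neg hp.le, Real.rpow_natCast, ← div_eq_mul_inv]
  rw [le_div_iff₀ (pow_pos hp _)]
  calc D * (1 + ‖x‖) ^ (d + 1) = (‖x‖ + 1) ^ (d + 1) * D := by ring
    _ ≤ _ := key

lemma integrable_decay_fun (d : ℕ) (T : ℝ) (C : ℝ) :
    Integrable (fun z : Rd d × ℝ => C * (1 + ‖z.1‖) ^ (-(d + 1 : ℝ))) (μQT d T) := by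
  have h1 : Integrable (fun x : Rd d => C * (1 + ‖x‖) ^ (-(d + 1 : ℝ))) volume := by
    refine (integrable_one_add_norm ?_).const_mul C
    rw [finrank_euclideanSpace_fin]
    linarith
  rw [μQT]
  have h2 := h1.mul_prod (integrable_const (μ := (volume : Measure ℝ).restrict (Set.Icc 0 T))
    (c := (1 : ℝ)))
  simpa using h2

lemma integrable_of_decay {h : Rd d × ℝ → ℝ} (hc : Continuous h) {C : ℝ}
    (hb : ∀ x : Rd d, ∀ t ∈ Set.Icc (0 : ℝ) T, |h (x, t)| ≤ C * (1 + ‖x‖) ^ (-(d + 1 : ℝ))) :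
    Integrable h (μQT d T) := by
  refine Integrable.mono' (integrable_decay_fun d T C) hc.aestronglyMeasurable ?_
  filter_upwards [ae_Icc d T] with z hz
  simpa [Real.norm_eq_abs] using hb z.1 z.2 hz

end AuxDecay
section AuxIBP

variable {d : ℕ}

lemma grad_coord (ψ : Rd d → ℝ) (x : Rd d) (i : Fin d) :
    grad ψ x i = fderiv ℝ ψ x (EuclideanSpace.single i 1) := by
  have h : (⟪grad ψ x, EuclideanSpace.single i (1 : ℝ)⟫ : ℝ)
      = fderiv ℝ ψ x (EuclideanSpace.single i 1) := by
    rw [grad, gradient]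
    exact InnerProductSpace.toDual_symm_apply
  rw [← h, EuclideanSpace.inner_single_right]
  simp

lemma inner_eq_sum (v w : Rd d) : (⟪v, w⟫ : ℝ) = ∑ i, v i * w i := by
  rw [PiLp.inner_apply]
  simp [RCLike.inner_apply, mul_comm]

lemma spatial_ibp {v : Rd d → Rd d} {ψ : Rd d → ℝ}
    (hv : ContDiff ℝ (⊤ : ℕ∞) v) (hψ : ContDiff ℝ (⊤ : ℕ∞) ψ) (hcs : HasCompactSupport ψ) :
    ∫ x, dvg v x * ψ x = -∫ x, (⟪v x, grad ψ x⟫ : ℝ) := by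
  have hvi : ∀ i : Fin d, ContDiff ℝ (⊤ : ℕ∞) (fun y => EuclideanSpace.proj (𝕜 := ℝ) i (v y)) :=
    fun i => (EuclideanSpace.proj (𝕜 := ℝ) i).contDiff.comp hv
  have hDcont : ∀ i : Fin d, Continuous (fun x =>
      fderiv ℝ (fun y => EuclideanSpace.proj (𝕜 := ℝ) i (v y)) x (EuclideanSpace.single i 1)) :=
    fun i => ((hvi i).continuous_fderiv (by simp)).clm_apply continuous_const
  have hψc := hψ.continuous
  have hint1 : ∀ i : Fin d, Integrable (fun x =>
      fderiv ℝ (fun y => EuclideanSpace.proj (𝕜 := ℝ) i (v y)) x (EuclideanSpace.single i 1)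
        * ψ x) volume :=
    fun i => ((hDcont i).mul hψc).integrable_of_hasCompactSupport hcs.mul_left
  have hdψcs : ∀ i : Fin d,
      HasCompactSupport (fun x => fderiv ℝ ψ x (EuclideanSpace.single i (1 : ℝ))) := by
    intro i
    apply HasCompactSupport.intro hcs
    intro x hx
    have : fderiv ℝ ψ x = 0 := by
      by_contra hne
      exact hx (support_fderiv_subset ℝ (Function.mem_support.2 hne))
    rw [this]; rfl
  have hint2 : ∀ i : Fin d, Integrable (fun x =>
      EuclideanSpace.proj (𝕜 := ℝ) i (v x) * fderiv ℝ ψ x (EuclideanSpace.single i 1)) volume := by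
    intro i
    have hc : Continuous (fun x =>
        EuclideanSpace.proj (𝕜 := ℝ) i (v x) * fderiv ℝ ψ x (EuclideanSpace.single i 1)) :=
      ((hvi i).continuous).mul ((hψ.continuous_fderiv (by simp)).clm_apply continuous_const)
    exact hc.integrable_of_hasCompactSupport (hdψcs i).mul_left
  have hint3 : ∀ i : Fin d,
      Integrable (fun x => EuclideanSpace.proj (𝕜 := ℝ) i (v x) * ψ x) volume :=
    fun i => ((hvi i).continuous.mul hψc).integrable_of_hasCompactSupport hcs.mul_left
  calc ∫ x, dvg v x * ψ x
      = ∫ x, ∑ i, fderiv ℝ (fun y => EuclideanSpace.proj (𝕜 := ℝ) i (v y)) x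
          (EuclideanSpace.single i 1) * ψ x := by simp only [dvg, Finset.sum_mul]
    _ = ∑ i, ∫ x, fderiv ℝ (fun y => EuclideanSpace.proj (𝕜 := ℝ) i (v y)) x
          (EuclideanSpace.single i 1) * ψ x := integral_finset_sum _ (fun i _ => hint1 i)
    _ = ∑ i, -∫ x, EuclideanSpace.proj (𝕜 := ℝ) i (v x)
          * fderiv ℝ ψ x (EuclideanSpace.single i 1) := by
        refine Finset.sum_congr rfl (fun i _ => ?_)
        have h := integral_mul_fderiv_eq_neg_fderiv_mul_of_integrable
          (hint1 i) (hint2 i) (hint3 i) (fun x _ => ((hvi i).differentiable (by simp)).differentiableAt)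
          (fun x _ => (hψ.differentiable (by simp)).differentiableAt)
        linarith [h]
    _ = -∑ i, ∫ x, EuclideanSpace.proj (𝕜 := ℝ) i (v x)
          * fderiv ℝ ψ x (EuclideanSpace.single i 1) := by rw [← Finset.sum_neg_distrib]
    _ = -∫ x, ∑ i, EuclideanSpace.proj (𝕜 := ℝ) i (v x)
          * fderiv ℝ ψ x (EuclideanSpace.single i 1) := by
        rw [integral_finset_sum _ (fun i _ => hint2 i)]
    _ = -∫ x, (⟪v x, grad ψ x⟫ : ℝ) := by
        have hpt : (fun x => ∑ i, EuclideanSpace.proj (𝕜 := ℝ) i (v x)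
            * fderiv ℝ ψ x (EuclideanSpace.single i 1)) = fun x => (⟪v x, grad ψ x⟫ : ℝ) := by
          funext x
          rw [inner_eq_sum]
          refine Finset.sum_congr rfl (fun i _ => ?_)
          rw [grad_coord]
          rfl
        rw [hpt]

end AuxIBP
section AuxKey

variable {d : ℕ} {T : ℝ}

lemma contDiff_grad {f : Rd d → ℝ} (hf : ContDiff ℝ (⊤ : ℕ∞) f) : ContDiff ℝ (⊤ : ℕ∞) (grad f) := by
  have h1 : ContDiff ℝ (⊤ : ℕ∞) (fun x => fderiv ℝ f x) := hf.fderiv_right (by simp)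
  have h2 := (((InnerProductSpace.toDual ℝ
    (Rd d)).symm.toContinuousLinearEquiv.toContinuousLinearMap).contDiff (n := (⊤ : ℕ∞))).comp h1
  exact h2

lemma holder_μQT {f g : Rd d × ℝ → ℝ} (hf0 : ∀ z, 0 ≤ f z) (hg0 : ∀ z, 0 ≤ g z)
    (hf : MemLp f 2 (μQT d T)) (hg : MemLp g 2 (μQT d T)) :
    ∫ z, f z * g z ∂(μQT d T)
      ≤ Real.sqrt (∫ z, f z ^ 2 ∂(μQT d T)) * Real.sqrt (∫ z, g z ^ 2 ∂(μQT d T)) := by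
  have hconj : (2 : ℝ).HolderConjugate 2 := by constructor <;> norm_num
  have h2 : ENNReal.ofReal (2 : ℝ) = 2 := by norm_num
  have h := MeasureTheory.integral_mul_le_Lp_mul_Lq_of_nonneg hconj
    (Filter.Eventually.of_forall hf0) (Filter.Eventually.of_forall hg0)
    (by rw [h2]; exact hf) (by rw [h2]; exact hg)
  have hrw : ∀ h : Rd d × ℝ → ℝ, (∫ z, h z ^ (2 : ℝ) ∂(μQT d T)) = ∫ z, h z ^ 2 ∂(μQT d T) := by
    intro h
    congr 1
    funext z
    rw [show (2 : ℝ) = ((2 : ℕ) : ℝ) by norm_num, Real.rpow_natCast]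
  rw [hrw f, hrw g] at h
  have hs : ∀ h : Rd d × ℝ → ℝ,
      (∫ z, h z ^ 2 ∂(μQT d T)) ^ (1 / 2 : ℝ) = Real.sqrt (∫ z, h z ^ 2 ∂(μQT d T)) := by
    intro h
    rw [Real.sqrt_eq_rpow]
  rw [hs f, hs g] at h
  exact h

lemma memℒp_two_of_cc {f : Rd d × ℝ → ℝ} (hc : Continuous f) (hcs : HasCompactSupport f) :
    MemLp f 2 (μQT d T) := by
  rw [memLp_two_iff_integrable_sq hc.aestronglyMeasurable]
  refine integrable_μQT_of_cc (hc.pow 2) (HasCompactSupport.intro hcs fun x hx => ?_)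
  rw [image_eq_zero_of_notMem_tsupport hx]
  ring

lemma memℒp_two_of_sq_int {f : Rd d × ℝ → ℝ} (hc : Continuous f)
    (hint : Integrable (fun z => f z ^ 2) (μQT d T)) : MemLp f 2 (μQT d T) :=
  (memLp_two_iff_integrable_sq hc.aestronglyMeasurable).2 hint

lemma key (d : ℕ) {T A : ℝ} (hT : 0 ≤ T) (hA : 0 ≤ A)
    (u r W φ : Rd d → ℝ → ℝ)
    (hu : ContDiff ℝ (⊤ : ℕ∞) (fun z : Rd d × ℝ => u z.1 z.2))
    (hW : ContDiff ℝ (⊤ : ℕ∞) (fun z : Rd d × ℝ => W z.1 z.2))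
    (hr : Continuous (fun z : Rd d × ℝ => r z.1 z.2))
    (hu0 : ∀ x t, 0 ≤ u x t) (huA : ∀ x t, u x t ≤ A)
    (hrA : ∀ x t, |r x t| ≤ A * u x t)
    (hpde : ∀ x : Rd d, ∀ t ∈ Set.Icc (0 : ℝ) T, deriv (fun s => u x s) t
      = dvg (fun y => u y t • grad (fun y' => W y' t) y) x + r x t)
    (hu2int : Integrable (fun z : Rd d × ℝ => u z.1 z.2 ^ 2) (μQT d T))
    (hW2int : Integrable (fun z : Rd d × ℝ => ‖grad (fun y => W y z.2) z.1‖ ^ 2) (μQT d T))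
    (hu2 : (∫ z : Rd d × ℝ, u z.1 z.2 ^ 2 ∂(μQT d T)) ≤ A ^ 2)
    (hW2 : (∫ z : Rd d × ℝ, ‖grad (fun y => W y z.2) z.1‖ ^ 2 ∂(μQT d T)) ≤ A ^ 2)
    (hφ : IsTest d (Set.Ioo 0 T) φ) :
    |∫ z, u z.1 z.2 * deriv (fun s => φ z.1 s) z.2 ∂(μQT d T)| ≤
      A ^ 2 * Real.sqrt (∫ z, ‖grad (fun y => φ y z.2) z.1‖ ^ 2 ∂(μQT d T))
        + A ^ 2 * Real.sqrt (∫ z, φ z.1 z.2 ^ 2 ∂(μQT d T)) := by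
  obtain ⟨hφs, hK, hφ0⟩ := hφ
  have cφ : Continuous fun z : Rd d × ℝ => φ z.1 z.2 := hφs.continuous
  have cu : Continuous fun z : Rd d × ℝ => u z.1 z.2 := hu.continuous
  have cDφ := continuous_derivSlice hφs
  have cgφ := continuous_gradSlice hφs
  have cgW := continuous_gradSlice hW
  have cDu : Continuous fun z : Rd d × ℝ =>
      fderiv ℝ (fun z : Rd d × ℝ => u z.1 z.2) z ((0 : Rd d), (1 : ℝ)) :=
    (hu.continuous_fderiv (by simp)).clm_apply continuous_const
  have hcsD : HasCompactSupport fun z : Rd d × ℝ => deriv (fun s => φ z.1 s) z.2 :=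
    HasCompactSupport.intro hK fun z hz => derivSlice_zero_off hφs hz
  have hcsg : HasCompactSupport fun z : Rd d × ℝ => grad (fun y => φ y z.2) z.1 :=
    HasCompactSupport.intro hK fun z hz => gradSlice_zero_off hφs hz
  -- integrability of all the integrands on Q_T
  have i1 : Integrable (fun z : Rd d × ℝ => u z.1 z.2 * deriv (fun s => φ z.1 s) z.2)
      (μQT d T) := integrable_μQT_of_cc (cu.mul cDφ) hcsD.mul_left
  have i2 : Integrable (fun z : Rd d × ℝ =>
      fderiv ℝ (fun z : Rd d × ℝ => u z.1 z.2) z ((0 : Rd d), (1 : ℝ)) * φ z.1 z.2)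
      (μQT d T) := integrable_μQT_of_cc (cDu.mul cφ) hK.mul_left
  have i3 : Integrable (fun z : Rd d × ℝ => r z.1 z.2 * φ z.1 z.2) (μQT d T) :=
    integrable_μQT_of_cc (hr.mul cφ) hK.mul_left
  have cinner : Continuous fun z : Rd d × ℝ =>
      (⟪grad (fun y => W y z.2) z.1, grad (fun y => φ y z.2) z.1⟫ : ℝ) := cgW.inner cgφ
  have i4 : Integrable (fun z : Rd d × ℝ =>
      u z.1 z.2 * ⟪grad (fun y => W y z.2) z.1, grad (fun y => φ y z.2) z.1⟫) (μQT d T) := by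
    refine integrable_μQT_of_cc (cu.mul cinner) (HasCompactSupport.intro hK fun z hz => ?_)
    rw [gradSlice_zero_off hφs hz]
    simp
  -- time integration by parts (for each fixed x)
  have timeIBP : ∀ x : Rd d,
      (∫ t in Set.Icc (0 : ℝ) T, u x t * deriv (fun s => φ x s) t)
        = -∫ t in Set.Icc (0 : ℝ) T, deriv (fun s => u x s) t * φ x t := by
    intro x
    have hφ0T : φ x T = 0 := hφ0 x T (by simp)
    have hφ00 : φ x 0 = 0 := hφ0 x 0 (by simp)
    have hcu' : Continuous fun s => deriv (fun s' => u x s') s :=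
      (continuous_derivSlice hu).comp (Continuous.prodMk_right x)
    have hcφ' : Continuous fun s => deriv (fun s' => φ x s') s :=
      (continuous_derivSlice hφs).comp (Continuous.prodMk_right x)
    rw [MeasureTheory.integral_Icc_eq_integral_Ioc, ← intervalIntegral.integral_of_le hT,
      MeasureTheory.integral_Icc_eq_integral_Ioc, ← intervalIntegral.integral_of_le hT]
    have h := intervalIntegral.integral_mul_deriv_eq_deriv_mul (a := (0 : ℝ)) (b := T)
      (u := fun s => u x s) (v := fun s => φ x s)
      (u' := fun s => deriv (fun s' => u x s') s) (v' := fun s => deriv (fun s' => φ x s') s)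
      (fun s _ => ((slice_t hu x).differentiable (by simp) s).hasDerivAt)
      (fun s _ => ((slice_t hφs x).differentiable (by simp) s).hasDerivAt)
      (hcu'.intervalIntegrable 0 T) (hcφ'.intervalIntegrable 0 T)
    simp only [hφ0T, hφ00, mul_zero, sub_zero, zero_sub] at h
    exact h
  -- step 1 : move the time derivative onto u
  have step1 : (∫ z, u z.1 z.2 * deriv (fun s => φ z.1 s) z.2 ∂(μQT d T))
      = -∫ z, fderiv ℝ (fun z : Rd d × ℝ => u z.1 z.2) z ((0 : Rd d), (1 : ℝ)) * φ z.1 z.2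
          ∂(μQT d T) := by
    rw [integral_μQT i1, integral_μQT i2]
    have hx : ∀ x : Rd d, (∫ t in Set.Icc (0 : ℝ) T, u x t * deriv (fun s => φ x s) t)
        = -∫ t in Set.Icc (0 : ℝ) T,
            fderiv ℝ (fun z : Rd d × ℝ => u z.1 z.2) (x, t) ((0 : Rd d), (1 : ℝ)) * φ x t := by
      intro x
      rw [timeIBP x]
      congr 1
      refine setIntegral_congr_fun measurableSet_Icc fun t _ => ?_
      rw [deriv_slice hu]
    calc (∫ x, ∫ t in Set.Icc (0 : ℝ) T, u x t * deriv (fun s => φ x s) t)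
        = ∫ x, -∫ t in Set.Icc (0 : ℝ) T,
            fderiv ℝ (fun z : Rd d × ℝ => u z.1 z.2) (x, t) ((0 : Rd d), (1 : ℝ)) * φ x t := by
          simp only [hx]
      _ = _ := by rw [integral_neg]
  -- step 2 : substitute the PDE
  have hae : (fun z : Rd d × ℝ =>
        fderiv ℝ (fun z : Rd d × ℝ => u z.1 z.2) z ((0 : Rd d), (1 : ℝ)) * φ z.1 z.2)
      =ᵐ[μQT d T] fun z : Rd d × ℝ =>
        dvg (fun y => u y z.2 • grad (fun y' => W y' z.2) y) z.1 * φ z.1 z.2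
          + r z.1 z.2 * φ z.1 z.2 := by
    filter_upwards [ae_Icc d T] with z hz
    rw [← deriv_slice hu z.1 z.2, hpde z.1 z.2 hz]
    ring
  have iDg : Integrable (fun z : Rd d × ℝ =>
      dvg (fun y => u y z.2 • grad (fun y' => W y' z.2) y) z.1 * φ z.1 z.2) (μQT d T) := by
    have h1 := (i2.congr hae).sub i3
    refine h1.congr (Filter.Eventually.of_forall fun z => by simp only [Pi.sub_apply]; ring)
  have step2 : (∫ z, fderiv ℝ (fun z : Rd d × ℝ => u z.1 z.2) z ((0 : Rd d), (1 : ℝ))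
        * φ z.1 z.2 ∂(μQT d T))
      = (∫ z, dvg (fun y => u y z.2 • grad (fun y' => W y' z.2) y) z.1 * φ z.1 z.2 ∂(μQT d T))
        + ∫ z, r z.1 z.2 * φ z.1 z.2 ∂(μQT d T) := by
    rw [integral_congr_ae hae]
    exact integral_add iDg i3
  -- step 3 : spatial integration by parts
  have hψcs : ∀ t : ℝ, HasCompactSupport fun x : Rd d => φ x t := by
    intro t
    refine HasCompactSupport.intro (hK.image continuous_fst) fun x hx => ?_
    by_contra hne
    exact hx ⟨(x, t), subset_tsupport _ hne, rfl⟩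
  have step3 : (∫ z, dvg (fun y => u y z.2 • grad (fun y' => W y' z.2) y) z.1 * φ z.1 z.2
        ∂(μQT d T))
      = -∫ z, u z.1 z.2 * ⟪grad (fun y => W y z.2) z.1, grad (fun y => φ y z.2) z.1⟫
          ∂(μQT d T) := by
    calc (∫ z, dvg (fun y => u y z.2 • grad (fun y' => W y' z.2) y) z.1 * φ z.1 z.2 ∂(μQT d T))
        = ∫ t in Set.Icc (0 : ℝ) T, ∫ x,
            dvg (fun y => u y t • grad (fun y' => W y' t) y) x * φ x t := integral_μQT_symm iDg
      _ = ∫ t in Set.Icc (0 : ℝ) T,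
            -∫ x, u x t * ⟪grad (fun y => W y t) x, grad (fun y => φ y t) x⟫ := by
          congr 1
          funext t
          have hv : ContDiff ℝ (⊤ : ℕ∞) fun y => u y t • grad (fun y' => W y' t) y :=
            (slice_x hu t).smul (contDiff_grad (slice_x hW t))
          rw [spatial_ibp hv (slice_x hφs t) (hψcs t)]
          have hfun : (fun x => (⟪u x t • grad (fun y' => W y' t) x, grad (fun y => φ y t) x⟫
              : ℝ)) = fun x => u x t * ⟪grad (fun y => W y t) x, grad (fun y => φ y t) x⟫ :=
            funext fun x => real_inner_smul_left _ _ _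
          rw [hfun]
      _ = -∫ t in Set.Icc (0 : ℝ) T,
            ∫ x, u x t * ⟪grad (fun y => W y t) x, grad (fun y => φ y t) x⟫ := integral_neg _
      _ = _ := by rw [integral_μQT_symm i4]
  have combine : (∫ z, u z.1 z.2 * deriv (fun s => φ z.1 s) z.2 ∂(μQT d T))
      = (∫ z, u z.1 z.2 * ⟪grad (fun y => W y z.2) z.1, grad (fun y => φ y z.2) z.1⟫
          ∂(μQT d T)) - ∫ z, r z.1 z.2 * φ z.1 z.2 ∂(μQT d T) := by
    rw [step1, step2, step3]
    ring
  -- step 4 : estimates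
  have hSφ0 : 0 ≤ Real.sqrt (∫ z, ‖grad (fun y => φ y z.2) z.1‖ ^ 2 ∂(μQT d T)) :=
    Real.sqrt_nonneg _
  have hSφ20 : 0 ≤ Real.sqrt (∫ z, φ z.1 z.2 ^ 2 ∂(μQT d T)) := Real.sqrt_nonneg _
  have mW : MemLp (fun z : Rd d × ℝ => ‖grad (fun y => W y z.2) z.1‖) 2 (μQT d T) :=
    memℒp_two_of_sq_int cgW.norm hW2int
  have mu : MemLp (fun z : Rd d × ℝ => u z.1 z.2) 2 (μQT d T) :=
    memℒp_two_of_sq_int cu hu2int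
  have mgφ : MemLp (fun z : Rd d × ℝ => ‖grad (fun y => φ y z.2) z.1‖) 2 (μQT d T) :=
    memℒp_two_of_cc cgφ.norm (HasCompactSupport.intro hK fun z hz => by
      rw [gradSlice_zero_off hφs hz]; simp)
  have mφ : MemLp (fun z : Rd d × ℝ => |φ z.1 z.2|) 2 (μQT d T) :=
    memℒp_two_of_cc cφ.abs (HasCompactSupport.intro hK fun z hz => by
      rw [image_eq_zero_of_notMem_tsupport hz]; simp)
  have hW2' : Real.sqrt (∫ z, ‖grad (fun y => W y z.2) z.1‖ ^ 2 ∂(μQT d T)) ≤ A := by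
    rw [show A = Real.sqrt (A ^ 2) by rw [Real.sqrt_sq hA]]
    exact Real.sqrt_le_sqrt hW2
  have hu2' : Real.sqrt (∫ z, u z.1 z.2 ^ 2 ∂(μQT d T)) ≤ A := by
    rw [show A = Real.sqrt (A ^ 2) by rw [Real.sqrt_sq hA]]
    exact Real.sqrt_le_sqrt hu2
  have term1 : |∫ z, u z.1 z.2 * ⟪grad (fun y => W y z.2) z.1, grad (fun y => φ y z.2) z.1⟫
        ∂(μQT d T)|
      ≤ A * (A * Real.sqrt (∫ z, ‖grad (fun y => φ y z.2) z.1‖ ^ 2 ∂(μQT d T))) := by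
    have iR : Integrable (fun z : Rd d × ℝ =>
        A * (‖grad (fun y => W y z.2) z.1‖ * ‖grad (fun y => φ y z.2) z.1‖)) (μQT d T) := by
      refine integrable_μQT_of_cc (continuous_const.mul (cgW.norm.mul cgφ.norm))
        (HasCompactSupport.intro hK fun z hz => ?_)
      rw [gradSlice_zero_off hφs hz]
      simp
    calc |∫ z, u z.1 z.2 * ⟪grad (fun y => W y z.2) z.1, grad (fun y => φ y z.2) z.1⟫
          ∂(μQT d T)|
        ≤ ∫ z, |u z.1 z.2 * ⟪grad (fun y => W y z.2) z.1, grad (fun y => φ y z.2) z.1⟫|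
            ∂(μQT d T) := by
          simpa [Real.norm_eq_abs, abs_mul] using norm_integral_le_integral_norm
            (fun z : Rd d × ℝ => u z.1 z.2 * ⟪grad (fun y => W y z.2) z.1,
              grad (fun y => φ y z.2) z.1⟫) (μ := μQT d T)
      _ ≤ ∫ z, A * (‖grad (fun y => W y z.2) z.1‖ * ‖grad (fun y => φ y z.2) z.1‖)
            ∂(μQT d T) := by
          refine integral_mono i4.abs iR fun z => ?_
          rw [abs_mul]
          refine mul_le_mul ?_ (abs_real_inner_le_norm _ _) (abs_nonneg _) hA
          rw [abs_of_nonneg (hu0 _ _)]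
          exact huA _ _
      _ = A * ∫ z, ‖grad (fun y => W y z.2) z.1‖ * ‖grad (fun y => φ y z.2) z.1‖
            ∂(μQT d T) := integral_const_mul _ _
      _ ≤ A * (Real.sqrt (∫ z, ‖grad (fun y => W y z.2) z.1‖ ^ 2 ∂(μQT d T))
            * Real.sqrt (∫ z, ‖grad (fun y => φ y z.2) z.1‖ ^ 2 ∂(μQT d T))) :=
          mul_le_mul_of_nonneg_left
            (holder_μQT (fun z => norm_nonneg _) (fun z => norm_nonneg _) mW mgφ) hA
      _ ≤ A * (A * Real.sqrt (∫ z, ‖grad (fun y => φ y z.2) z.1‖ ^ 2 ∂(μQT d T))) :=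
          mul_le_mul_of_nonneg_left (mul_le_mul_of_nonneg_right hW2' hSφ0) hA
  have hφsq : (∫ z, |φ z.1 z.2| ^ 2 ∂(μQT d T)) = ∫ z, φ z.1 z.2 ^ 2 ∂(μQT d T) := by
    congr 1
    funext z
    rw [sq_abs]
  have term2 : |∫ z, r z.1 z.2 * φ z.1 z.2 ∂(μQT d T)|
      ≤ A * (A * Real.sqrt (∫ z, φ z.1 z.2 ^ 2 ∂(μQT d T))) := by
    have iR : Integrable (fun z : Rd d × ℝ => A * (u z.1 z.2 * |φ z.1 z.2|)) (μQT d T) := by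
      refine integrable_μQT_of_cc (continuous_const.mul (cu.mul cφ.abs))
        (HasCompactSupport.intro hK fun z hz => ?_)
      rw [image_eq_zero_of_notMem_tsupport hz]
      simp
    calc |∫ z, r z.1 z.2 * φ z.1 z.2 ∂(μQT d T)|
        ≤ ∫ z, |r z.1 z.2 * φ z.1 z.2| ∂(μQT d T) := by
          simpa [Real.norm_eq_abs, abs_mul] using norm_integral_le_integral_norm
            (fun z : Rd d × ℝ => r z.1 z.2 * φ z.1 z.2) (μ := μQT d T)
      _ ≤ ∫ z, A * (u z.1 z.2 * |φ z.1 z.2|) ∂(μQT d T) := by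
          refine integral_mono i3.abs iR fun z => ?_
          rw [abs_mul, ← mul_assoc]
          exact mul_le_mul_of_nonneg_right (hrA _ _) (abs_nonneg _)
      _ = A * ∫ z, u z.1 z.2 * |φ z.1 z.2| ∂(μQT d T) := integral_const_mul _ _
      _ ≤ A * (Real.sqrt (∫ z, u z.1 z.2 ^ 2 ∂(μQT d T))
            * Real.sqrt (∫ z, |φ z.1 z.2| ^ 2 ∂(μQT d T))) :=
          mul_le_mul_of_nonneg_left
            (holder_μQT (fun z => hu0 _ _) (fun z => abs_nonneg _) mu mφ) hA
      _ ≤ A * (A * Real.sqrt (∫ z, φ z.1 z.2 ^ 2 ∂(μQT d T))) := by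
          rw [hφsq]
          exact mul_le_mul_of_nonneg_left (mul_le_mul_of_nonneg_right hu2' hSφ20) hA
  calc |∫ z, u z.1 z.2 * deriv (fun s => φ z.1 s) z.2 ∂(μQT d T)|
      = |(∫ z, u z.1 z.2 * ⟪grad (fun y => W y z.2) z.1, grad (fun y => φ y z.2) z.1⟫
          ∂(μQT d T)) - ∫ z, r z.1 z.2 * φ z.1 z.2 ∂(μQT d T)| := by rw [combine]
    _ ≤ |∫ z, u z.1 z.2 * ⟪grad (fun y => W y z.2) z.1, grad (fun y => φ y z.2) z.1⟫
          ∂(μQT d T)| + |∫ z, r z.1 z.2 * φ z.1 z.2 ∂(μQT d T)| := abs_sub _ _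
    _ ≤ A * (A * Real.sqrt (∫ z, ‖grad (fun y => φ y z.2) z.1‖ ^ 2 ∂(μQT d T)))
          + A * (A * Real.sqrt (∫ z, φ z.1 z.2 ^ 2 ∂(μQT d T))) := add_le_add term1 term2
    _ = _ := by ring

end AuxKey
section AuxFinal

variable {d : ℕ} {T : ℝ}

lemma proj_smul (j : Fin d) (a : ℝ) (w : Rd d) :
    EuclideanSpace.proj (𝕜 := ℝ) j (a • w) = a * w j := rfl

lemma dvg_const_mul_sum {N : ℕ} (c : ℝ) (f : Fin N → Rd d → ℝ) (g : Rd d → Rd d)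
    (hf : ∀ i, ContDiff ℝ (⊤ : ℕ∞) (f i)) (hg : ContDiff ℝ (⊤ : ℕ∞) g) (x : Rd d) :
    dvg (fun y => (c * ∑ i, f i y) • g y) x = c * ∑ i, dvg (fun y => f i y • g y) x := by
  have hgj : ∀ j : Fin d, ContDiff ℝ (⊤ : ℕ∞) (fun y => (g y : Rd d) j) := by
    intro j
    exact (EuclideanSpace.proj (𝕜 := ℝ) j).contDiff.comp hg
  have hdiff : ∀ (i : Fin N) (j : Fin d),
      Differentiable ℝ (fun y => f i y * (g y : Rd d) j) :=
    fun i j => ((hf i).differentiable (by simp)).mul ((hgj j).differentiable (by simp))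
  have h1 : ∀ j : Fin d,
      (fun y => EuclideanSpace.proj (𝕜 := ℝ) j ((c * ∑ i, f i y) • g y))
        = fun y => c * ∑ i, f i y * (g y : Rd d) j := by
    intro j
    funext y
    rw [proj_smul, mul_assoc, Finset.sum_mul]
  have h2 : ∀ (i : Fin N) (j : Fin d),
      (fun y => EuclideanSpace.proj (𝕜 := ℝ) j (f i y • g y))
        = fun y => f i y * (g y : Rd d) j := by
    intro i j
    funext y
    rw [proj_smul]
  have h3 : ∀ (j : Fin d) (x' : Rd d),
      fderiv ℝ (fun y => c * ∑ i, f i y * (g y : Rd d) j) x' (EuclideanSpace.single j 1)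
        = c * ∑ i, fderiv ℝ (fun y => f i y * (g y : Rd d) j) x'
            (EuclideanSpace.single j 1) := by
    intro j x'
    have hds : DifferentiableAt ℝ (fun y => ∑ i, f i y * (g y : Rd d) j) x' :=
      DifferentiableAt.fun_sum fun i _ => (hdiff i j).differentiableAt
    rw [fderiv_const_mul hds c, fderiv_fun_sum (fun i _ => (hdiff i j).differentiableAt)]
    simp [Finset.mul_sum]
  simp only [dvg, h1, h2, h3]
  simp only [← Finset.mul_sum]
  rw [Finset.sum_comm]

lemma decay_le_one {x : Rd d} : (1 + ‖x‖) ^ (-(d + 1 : ℝ)) ≤ 1 :=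
  Real.rpow_le_one_of_one_le_of_nonpos (by linarith [norm_nonneg x]) (neg_nonpos.mpr (by positivity))

lemma decay_nonneg {x : Rd d} : 0 ≤ (1 + ‖x‖) ^ (-(d + 1 : ℝ)) :=
  Real.rpow_nonneg (by positivity) _

lemma sq_decay_bound {a C D : ℝ} (ha : 0 ≤ a) (hD : 0 ≤ D) (hD1 : D ≤ 1) (h : a ≤ C * D) :
    a ^ 2 ≤ C ^ 2 * D := by
  nlinarith [mul_le_mul h h ha (le_trans ha h), sq_nonneg C, mul_nonneg (sq_nonneg C) hD]

lemma norm_grad_eq {f : Rd d → ℝ} (x : Rd d) :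
    ‖grad f x‖ = ‖iteratedFDeriv ℝ 1 f x‖ := by
  rw [grad, gradient, LinearIsometryEquiv.norm_map, ← norm_iteratedFDeriv_fderiv,
    norm_iteratedFDeriv_zero]

lemma integrable_sq_of_decay_bound {u : Rd d → ℝ → ℝ}
    (hc : Continuous fun z : Rd d × ℝ => u z.1 z.2)
    (hu0 : ∀ x t, 0 ≤ u x t) (C : ℝ)
    (hb : ∀ x : Rd d, ∀ t ∈ Set.Icc (0 : ℝ) T, u x t ≤ C * (1 + ‖x‖) ^ (-(d + 1 : ℝ))) :
    Integrable (fun z : Rd d × ℝ => u z.1 z.2 ^ 2) (μQT d T) := by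
  refine integrable_of_decay (hc.pow 2) (C := C ^ 2) fun x t ht => ?_
  rw [abs_of_nonneg (pow_nonneg (hu0 x t) 2)]
  exact sq_decay_bound (hu0 x t) decay_nonneg decay_le_one (hb x t ht)

/-- Integrability of the square of a Schwartz-decaying, continuous function. -/
lemma integrable_sq_of_schwartz {u : Rd d → ℝ → ℝ}
    (hc : Continuous fun z : Rd d × ℝ => u z.1 z.2)
    (hu0 : ∀ x t, 0 ≤ u x t) (hs : SchwartzUniformly d T u) :
    Integrable (fun z : Rd d × ℝ => u z.1 z.2 ^ 2) (μQT d T) := by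
  obtain ⟨C, hC⟩ := schwartz_decay hs 0
  refine integrable_sq_of_decay_bound hc hu0 C fun x t ht => ?_
  have := hC t ht x
  rwa [norm_iteratedFDeriv_zero, Real.norm_eq_abs, abs_of_nonneg (hu0 x t)] at this

/-- Integrability of the squared norm of the gradient of a Schwartz-decaying function. -/
lemma integrable_sq_grad_of_schwartz {W : Rd d → ℝ → ℝ}
    (hW : ContDiff ℝ (⊤ : ℕ∞) (fun z : Rd d × ℝ => W z.1 z.2)) (hs : SchwartzUniformly d T W) :
    Integrable (fun z : Rd d × ℝ => ‖grad (fun y => W y z.2) z.1‖ ^ 2) (μQT d T) := by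
  obtain ⟨C, hC⟩ := schwartz_decay hs 1
  refine integrable_of_decay (((continuous_gradSlice hW).norm).pow 2) (C := C ^ 2)
    fun x t ht => ?_
  have hb : ‖grad (fun y => W y t) x‖ ≤ C * (1 + ‖x‖) ^ (-(d + 1 : ℝ)) := by
    rw [norm_grad_eq]
    exact hC t ht x
  rw [abs_of_nonneg (pow_nonneg (norm_nonneg _) 2)]
  exact sq_decay_bound (norm_nonneg _) decay_nonneg decay_le_one hb

lemma phen_mem {N : ℕ} (i : Fin N) : phen i ∈ Set.Icc (0 : ℝ) 1 := by
  have hN : (0 : ℝ) < N := by exact_mod_cast i.pos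
  rw [Set.mem_Icc, phen]
  constructor
  · positivity
  · rw [div_le_one hN]
    exact_mod_cast Nat.succ_le_of_lt i.isLt

end AuxFinal
/-- the time derivative of `n̄` (and of each phenotype density `n(·,·,a)`)
is bounded in `L²(0,T;H⁻¹(ℝ^d))` by a constant independent of `N`, `k` and `ν`:
for every test function `φ` supported in `ℝ^d × (0,T)`,
`|∬ n̄ ∂_t φ| ≤ A² ‖∇φ‖_{L²(Q_T)} + A² ‖φ‖_{L²(Q_T)}`. -/
theorem stmt6 (d N : ℕ) (hd : 1 ≤ d) (T k ν A : ℝ) (hT : 0 < T) (hk : 2 < k)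
    (hν : 0 < ν) (G : ℝ → ℝ → ℝ) (hG : GHyp G)
    (n : Fin N → Rd d → ℝ → ℝ) (p W : Rd d → ℝ → ℝ) (nf : ℝ → Rd d → ℝ → ℝ)
    (hsol : ClassicalSol d T k ν G n p W)
    (hnf : ∀ a ∈ Set.Icc (0 : ℝ) 1,
      ContDiff ℝ (⊤ : ℕ∞) (fun z : Rd d × ℝ => nf a z.1 z.2) ∧
      (∀ x t, 0 ≤ nf a x t) ∧ SchwartzUniformly d T (nf a) ∧
      (∀ (x : Rd d), ∀ t ∈ Set.Icc (0 : ℝ) T,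
        deriv (fun s => nf a x s) t =
          dvg (fun y => nf a y t • grad (fun y' => W y' t) y) x
            + nf a x t * G (p x t) a))
    (hbar_inf : ∀ x t, nbar n x t ≤ A)
    (hbar_two : (∫ z, nbar n z.1 z.2 ^ 2 ∂(μQT d T)) ≤ A ^ 2)
    (hgradW : (∫ z, ‖grad (fun y => W y z.2) z.1‖ ^ 2 ∂(μQT d T)) ≤ A ^ 2)
    (hGb : ∀ (x : Rd d) (t : ℝ), ∀ a ∈ Set.Icc (0 : ℝ) 1, |G (p x t) a| ≤ A)
    (hnf_inf : ∀ a ∈ Set.Icc (0 : ℝ) 1, ∀ x t, nf a x t ≤ A)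
    (hnf_two : ∀ a ∈ Set.Icc (0 : ℝ) 1, (∫ z, nf a z.1 z.2 ^ 2 ∂(μQT d T)) ≤ A ^ 2) :
    ∀ φ : Rd d → ℝ → ℝ, IsTest d (Set.Ioo 0 T) φ →
      (|∫ z, nbar n z.1 z.2 * deriv (fun s => φ z.1 s) z.2 ∂(μQT d T)| ≤
        A ^ 2 * Real.sqrt (∫ z, ‖grad (fun y => φ y z.2) z.1‖ ^ 2 ∂(μQT d T))
          + A ^ 2 * Real.sqrt (∫ z, φ z.1 z.2 ^ 2 ∂(μQT d T))) ∧
      ∀ a ∈ Set.Icc (0 : ℝ) 1,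
        |∫ z, nf a z.1 z.2 * deriv (fun s => φ z.1 s) z.2 ∂(μQT d T)| ≤
          A ^ 2 * Real.sqrt (∫ z, ‖grad (fun y => φ y z.2) z.1‖ ^ 2 ∂(μQT d T))
            + A ^ 2 * Real.sqrt (∫ z, φ z.1 z.2 ^ 2 ∂(μQT d T)) := by
  obtain ⟨hns, hps, hWs, hn0, hp0, hW0, hnpde, hplaw, hbrink, hnsch, hpsch, hWsch⟩ := hsol
  have hnbar0 : ∀ (x : Rd d) (t : ℝ), 0 ≤ nbar n x t := fun x t =>
    mul_nonneg (by positivity) (Finset.sum_nonneg fun i _ => hn0 i x t)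
  have hA : 0 ≤ A := le_trans (hnbar0 0 0) (hbar_inf 0 0)
  have hW2int := integrable_sq_grad_of_schwartz hWs hWsch
  have hGc : Continuous fun q : ℝ × ℝ => G q.1 q.2 := hG.1.continuous
  have hpc : Continuous fun z : Rd d × ℝ => p z.1 z.2 := hps.continuous
  intro φ hφ
  constructor
  · -- the averaged density
    set r : Rd d → ℝ → ℝ := fun x t => (N : ℝ)⁻¹ * ∑ i, n i x t * G (p x t) (phen i) with hrdef
    have hu : ContDiff ℝ (⊤ : ℕ∞) (fun z : Rd d × ℝ => nbar n z.1 z.2) := by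
      have h0 : (fun z : Rd d × ℝ => nbar n z.1 z.2)
          = fun z : Rd d × ℝ => (N : ℝ)⁻¹ * ∑ i, n i z.1 z.2 := rfl
      rw [h0]
      exact contDiff_const.mul (ContDiff.sum fun i _ => hns i)
    have hrc : Continuous (fun z : Rd d × ℝ => r z.1 z.2) := by
      apply continuous_const.mul
      apply continuous_finset_sum
      intro i _
      exact ((hns i).continuous).mul (hGc.comp (hpc.prodMk continuous_const))
    have hrA : ∀ (x : Rd d) (t : ℝ), |r x t| ≤ A * nbar n x t := by
      intro x t
      calc |r x t| = (N : ℝ)⁻¹ * |∑ i, n i x t * G (p x t) (phen i)| := by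
            rw [hrdef, abs_mul, abs_of_nonneg (by positivity : (0 : ℝ) ≤ (N : ℝ)⁻¹)]
        _ ≤ (N : ℝ)⁻¹ * ∑ i, |n i x t * G (p x t) (phen i)| :=
            mul_le_mul_of_nonneg_left (Finset.abs_sum_le_sum_abs _ _) (by positivity)
        _ ≤ (N : ℝ)⁻¹ * ∑ i, n i x t * A := by
            refine mul_le_mul_of_nonneg_left (Finset.sum_le_sum fun i _ => ?_) (by positivity)
            rw [abs_mul, abs_of_nonneg (hn0 i x t)]
            exact mul_le_mul_of_nonneg_left (hGb x t (phen i) (phen_mem i)) (hn0 i x t)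
        _ = A * nbar n x t := by rw [nbar, ← Finset.sum_mul]; ring
    have hpde : ∀ x : Rd d, ∀ t ∈ Set.Icc (0 : ℝ) T,
        deriv (fun s => nbar n x s) t
          = dvg (fun y => nbar n y t • grad (fun y' => W y' t) y) x + r x t := by
      intro x t ht
      have hdiffi : ∀ i : Fin N, DifferentiableAt ℝ (fun s => n i x s) t :=
        fun i => (slice_t (hns i) x).differentiable (by simp) t
      have hL : deriv (fun s => nbar n x s) t
          = (N : ℝ)⁻¹ * ∑ i, deriv (fun s => n i x s) t := by
        have h0 : (fun s => nbar n x s) = fun s => (N : ℝ)⁻¹ * ∑ i, n i x s := rfl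
        rw [h0, deriv_const_mul _ (DifferentiableAt.fun_sum fun i _ => hdiffi i),
          deriv_fun_sum (fun i _ => hdiffi i)]
      have hR : dvg (fun y => nbar n y t • grad (fun y' => W y' t) y) x
          = (N : ℝ)⁻¹ * ∑ i, dvg (fun y => n i y t • grad (fun y' => W y' t) y) x := by
        have h0 : (fun y => nbar n y t • grad (fun y' => W y' t) y)
            = fun y => ((N : ℝ)⁻¹ * ∑ i, n i y t) • grad (fun y' => W y' t) y := rfl
        rw [h0]
        exact dvg_const_mul_sum _ (fun i y => n i y t) _ (fun i => slice_x (hns i) t)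
          (contDiff_grad (slice_x hWs t)) x
      calc deriv (fun s => nbar n x s) t
          = (N : ℝ)⁻¹ * ∑ i, (dvg (fun y => n i y t • grad (fun y' => W y' t) y) x
              + n i x t * G (p x t) (phen i)) := by
            rw [hL]
            congr 1
            exact Finset.sum_congr rfl fun i _ => hnpde i x t ht
        _ = dvg (fun y => nbar n y t • grad (fun y' => W y' t) y) x + r x t := by
            rw [Finset.sum_add_distrib, mul_add, ← hR]
    have hu2int : Integrable (fun z : Rd d × ℝ => nbar n z.1 z.2 ^ 2) (μQT d T) := by
      choose Cn hCn using fun i : Fin N => schwartz_decay (hnsch i) 0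
      refine integrable_sq_of_decay_bound hu.continuous hnbar0 ((N : ℝ)⁻¹ * ∑ i, Cn i)
        fun x t ht => ?_
      have hbi : ∀ i : Fin N, n i x t ≤ Cn i * (1 + ‖x‖) ^ (-(d + 1 : ℝ)) := by
        intro i
        have := hCn i t ht x
        rwa [norm_iteratedFDeriv_zero, Real.norm_eq_abs, abs_of_nonneg (hn0 i x t)] at this
      calc nbar n x t = (N : ℝ)⁻¹ * ∑ i, n i x t := rfl
        _ ≤ (N : ℝ)⁻¹ * ∑ i, Cn i * (1 + ‖x‖) ^ (-(d + 1 : ℝ)) :=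
            mul_le_mul_of_nonneg_left (Finset.sum_le_sum fun i _ => hbi i) (by positivity)
        _ = (N : ℝ)⁻¹ * ∑ i, Cn i * (1 + ‖x‖) ^ (-(d + 1 : ℝ)) := rfl
        _ = (N : ℝ)⁻¹ * (∑ i, Cn i) * (1 + ‖x‖) ^ (-(d + 1 : ℝ)) := by
            rw [← Finset.sum_mul]; ring
    exact key d hT.le hA (nbar n) r W φ hu hWs hrc hnbar0 hbar_inf hrA hpde hu2int
      hW2int hbar_two hgradW hφ
  · -- the phenotype densities
    intro a ha
    obtain ⟨hnfs, hnf0, hnfsch, hnfpde⟩ := hnf a ha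
    have hrc : Continuous fun z : Rd d × ℝ => nf a z.1 z.2 * G (p z.1 z.2) a :=
      hnfs.continuous.mul (hGc.comp (hpc.prodMk continuous_const))
    have hrA : ∀ (x : Rd d) (t : ℝ), |nf a x t * G (p x t) a| ≤ A * nf a x t := by
      intro x t
      rw [abs_mul, abs_of_nonneg (hnf0 x t), mul_comm A (nf a x t)]
      exact mul_le_mul_of_nonneg_left (hGb x t a ha) (hnf0 x t)
    exact key d hT.le hA (nf a) (fun x t => nf a x t * G (p x t) a) W φ hnfs hWs hrc
      hnf0 (hnf_inf a ha) hrA hnfpde (integrable_sq_of_schwartz hnfs.continuous hnf0 hnfsch)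
      hW2int (hnf_two a ha) hgradW hφ

end
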